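/- Let m ≥ 1 and let H11, H12, H21, H22, L11, L21, L22, U11, U12, U22 be m×m real matrices; set H = [[H11, H12],[H21, H22]], L = [[L11, 0],[L21, L22]] and U = [[U11, U12],[0, U22]] (2×2 block matrices). Let u, γ, ρ, h ≥ 0 and assume: (a) ‖L11·U11 − H11‖_F ≤ γ·‖L11‖_F·‖U11‖_F; (b) ‖L11·U12 − H12‖_F ≤ ρ·‖L11‖_F·‖U12‖_F; (c) ‖L21·U11 − H21‖_F ≤ ρ·‖L21‖_F·‖U11‖_F; (d) ‖L21·U12 + L22·U22 − H22‖_F ≤ u·‖H22‖_F + (1 + h)·u·‖L21‖_F·‖U12‖_F + γ·‖L22‖_F·‖U22‖_F. Then L·U = H + ΔH with ‖ΔH‖_F ≤ u·‖H‖_F + (2γ + (1 + h)·u + 2ρ)·‖L‖_F·‖U‖_F. -/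
import Mathlib


/-- Frobenius norm of a real matrix: `‖M‖_F = (Σ_{i,j} m_{ij}²)^{1/2}`. -/
noncomputable def frob {α β : Type*} [Fintype α] [Fintype β] (A : Matrix α β ℝ) : ℝ :=
  Real.sqrt (∑ i, ∑ j, (A i j) ^ 2)

lemma frob_nonneg {α β : Type*} [Fintype α] [Fintype β] (A : Matrix α β ℝ) : 0 ≤ frob A :=
  Real.sqrt_nonneg _

lemma sumsq_nonneg {α β : Type*} [Fintype α] [Fintype β] (A : Matrix α β ℝ) :
    0 ≤ ∑ i, ∑ j, (A i j)^2 := by positivity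

lemma sumsq_fromBlocks {m : ℕ} (A B C D : Matrix (Fin m) (Fin m) ℝ) :
    (∑ i, ∑ j, (Matrix.fromBlocks A B C D i j)^2)
      = (∑ i, ∑ j, (A i j)^2) + (∑ i, ∑ j, (B i j)^2)
        + (∑ i, ∑ j, (C i j)^2) + (∑ i, ∑ j, (D i j)^2) := by
  rw [Fintype.sum_sum_type]
  simp only [Fintype.sum_sum_type, Matrix.fromBlocks_apply₁₁, Matrix.fromBlocks_apply₁₂,
    Matrix.fromBlocks_apply₂₁, Matrix.fromBlocks_apply₂₂, Finset.sum_add_distrib]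
  ring

lemma frob_block_le {m : ℕ} (A B C D : Matrix (Fin m) (Fin m) ℝ) :
    frob A ≤ frob (Matrix.fromBlocks A B C D) ∧ frob B ≤ frob (Matrix.fromBlocks A B C D) ∧
    frob C ≤ frob (Matrix.fromBlocks A B C D) ∧ frob D ≤ frob (Matrix.fromBlocks A B C D) := by
  unfold frob
  rw [sumsq_fromBlocks]
  have hA := sumsq_nonneg A; have hB := sumsq_nonneg B
  have hC := sumsq_nonneg C; have hD := sumsq_nonneg D
  refine ⟨?_, ?_, ?_, ?_⟩ <;> exact Real.sqrt_le_sqrt (by linarith)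

lemma my_sqrt_add_le {a b : ℝ} (ha : 0 ≤ a) (hb : 0 ≤ b) :
    Real.sqrt (a + b) ≤ Real.sqrt a + Real.sqrt b := by
  have h1 := Real.sq_sqrt ha
  have h2 := Real.sq_sqrt hb
  have h3 := Real.sqrt_nonneg a
  have h4 := Real.sqrt_nonneg b
  have : a + b ≤ (Real.sqrt a + Real.sqrt b)^2 := by nlinarith
  calc Real.sqrt (a + b) ≤ Real.sqrt ((Real.sqrt a + Real.sqrt b)^2) := Real.sqrt_le_sqrt this
    _ = Real.sqrt a + Real.sqrt b := Real.sqrt_sq (by linarith)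

lemma frob_fromBlocks_le {m : ℕ} (A B C D : Matrix (Fin m) (Fin m) ℝ) :
    frob (Matrix.fromBlocks A B C D) ≤ frob A + frob B + frob C + frob D := by
  unfold frob
  rw [sumsq_fromBlocks]
  have hA := sumsq_nonneg A; have hB := sumsq_nonneg B
  have hC := sumsq_nonneg C; have hD := sumsq_nonneg D
  have h1 : Real.sqrt ((∑ i, ∑ j, (A i j)^2) + (∑ i, ∑ j, (B i j)^2)
      + (∑ i, ∑ j, (C i j)^2) + (∑ i, ∑ j, (D i j)^2))
      ≤ Real.sqrt ((∑ i, ∑ j, (A i j)^2) + (∑ i, ∑ j, (B i j)^2)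
      + (∑ i, ∑ j, (C i j)^2)) + Real.sqrt (∑ i, ∑ j, (D i j)^2) :=
    my_sqrt_add_le (by linarith) hD
  have h2 : Real.sqrt ((∑ i, ∑ j, (A i j)^2) + (∑ i, ∑ j, (B i j)^2)
      + (∑ i, ∑ j, (C i j)^2))
      ≤ Real.sqrt ((∑ i, ∑ j, (A i j)^2) + (∑ i, ∑ j, (B i j)^2))
        + Real.sqrt (∑ i, ∑ j, (C i j)^2) :=
    my_sqrt_add_le (by linarith) hC
  have h3 : Real.sqrt ((∑ i, ∑ j, (A i j)^2) + (∑ i, ∑ j, (B i j)^2))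
      ≤ Real.sqrt (∑ i, ∑ j, (A i j)^2) + Real.sqrt (∑ i, ∑ j, (B i j)^2) :=
    my_sqrt_add_le hA hB
  linarith

lemma mul_mul_le {c a b a' b' : ℝ} (hc : 0 ≤ c) (ha0 : 0 ≤ a) (hb0 : 0 ≤ b)
    (ha : a ≤ a') (hb : b ≤ b') : c * a * b ≤ c * a' * b' :=
  mul_le_mul (mul_le_mul_of_nonneg_left ha hc) hb hb0 (mul_nonneg hc (ha0.trans ha))


/-- Level-(ℓ−1) backward error bound for the hierarchical LU factorization: combining a
dense LU of the (1,1) block (error constant `γ`), triangular solves for the off-diagonal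
blocks (error constant `ρ`), and the Schur-complement LU of the (2,2) block gives
`L·U = H + ΔH` with `‖ΔH‖_F ≤ u·‖H‖_F + (2γ + (1 + h)·u + 2ρ)·‖L‖_F·‖U‖_F`. -/
theorem block_lu_backward_error_level_penultimate (m : ℕ) (hm : 1 ≤ m)
    (H11 H12 H21 H22 L11 L21 L22 U11 U12 U22 : Matrix (Fin m) (Fin m) ℝ)
    (u γ ρ h : ℝ) (hu : 0 ≤ u) (hγ : 0 ≤ γ) (hρ : 0 ≤ ρ) (hh : 0 ≤ h)
    (ha : frob (L11 * U11 - H11) ≤ γ * frob L11 * frob U11)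
    (hb : frob (L11 * U12 - H12) ≤ ρ * frob L11 * frob U12)
    (hc : frob (L21 * U11 - H21) ≤ ρ * frob L21 * frob U11)
    (hd : frob (L21 * U12 + L22 * U22 - H22)
      ≤ u * frob H22 + (1 + h) * u * frob L21 * frob U12 + γ * frob L22 * frob U22) :
    frob (Matrix.fromBlocks L11 0 L21 L22 * Matrix.fromBlocks U11 U12 0 U22
        - Matrix.fromBlocks H11 H12 H21 H22)
      ≤ u * frob (Matrix.fromBlocks H11 H12 H21 H22)
        + (2 * γ + (1 + h) * u + 2 * ρ)
          * frob (Matrix.fromBlocks L11 0 L21 L22)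
          * frob (Matrix.fromBlocks U11 U12 0 U22) := by
  have key : Matrix.fromBlocks L11 0 L21 L22 * Matrix.fromBlocks U11 U12 0 U22
      - Matrix.fromBlocks H11 H12 H21 H22
      = Matrix.fromBlocks (L11 * U11 - H11) (L11 * U12 - H12) (L21 * U11 - H21)
          (L21 * U12 + L22 * U22 - H22) := by
    rw [Matrix.fromBlocks_multiply]
    ext (i | i) (j | j) <;>
      simp [Matrix.fromBlocks, Matrix.sub_apply, Matrix.add_apply]
  rw [key]
  set L := Matrix.fromBlocks L11 0 L21 L22
  set U := Matrix.fromBlocks U11 U12 0 U22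
  set H := Matrix.fromBlocks H11 H12 H21 H22
  have hLblocks := frob_block_le L11 0 L21 L22
  have hUblocks := frob_block_le U11 U12 0 U22
  have hHblocks := frob_block_le H11 H12 H21 H22
  have tri := frob_fromBlocks_le (L11 * U11 - H11) (L11 * U12 - H12) (L21 * U11 - H21)
    (L21 * U12 + L22 * U22 - H22)
  have n1 := frob_nonneg L11; have n2 := frob_nonneg L21; have n3 := frob_nonneg L22
  have n4 := frob_nonneg U11; have n5 := frob_nonneg U12; have n6 := frob_nonneg U22
  have nH : frob H22 ≤ frob H := hHblocks.2.2.2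
  have e1 : γ * frob L11 * frob U11 ≤ γ * frob L * frob U :=
    mul_mul_le hγ n1 n4 hLblocks.1 hUblocks.1
  have e2 : ρ * frob L11 * frob U12 ≤ ρ * frob L * frob U :=
    mul_mul_le hρ n1 n5 hLblocks.1 hUblocks.2.1
  have e3 : ρ * frob L21 * frob U11 ≤ ρ * frob L * frob U :=
    mul_mul_le hρ n2 n4 hLblocks.2.2.1 hUblocks.1
  have e4 : (1 + h) * u * frob L21 * frob U12 ≤ (1 + h) * u * frob L * frob U := by
    have : 0 ≤ (1 + h) * u := by positivity
    exact mul_mul_le this n2 n5 hLblocks.2.2.1 hUblocks.2.1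
  have e5 : γ * frob L22 * frob U22 ≤ γ * frob L * frob U :=
    mul_mul_le hγ n3 n6 hLblocks.2.2.2 hUblocks.2.2.2
  have e6 : u * frob H22 ≤ u * frob H := by nlinarith
  linarith
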